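/- arXiv:1811.00756 — 5 statements merged into one kernel-verified Lean document; each statement's English description precedes it below -/
import Mathlib

section
/- Let (S,e,T) be a Rem step of the Simpler Lazy Set algorithm that physically removes address d (i.e., Nextᵀ(c) = Nextˢ(d) where Nextˢ(c) = d, and Nextᵀ = Nextˢ elsewhere). Let a be any active address, Q the path from a to Tail in S, and R the path from a to Tail in T. Then either R = Q (when c ∉ Q) or R = Q ∖ {d} (when c ∈ Q, in which case d and Nextˢ(d) are also on Q). -/
/-- A state structure of the Simpler Lazy Set algorithm over the address
type `A` with fixed Head address `H` and Tail address `T`: a set of active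
addresses, the `next` fields, and the key values (in ℕ ∪ {-1, ∞},
modelled inside `WithTop ℤ`). -/
structure SState (A : Type) (H T : A) where
  Active : Set A
  Next : A → A
  Val : A → WithTop ℤ

variable {A : Type} {H T : A}

/-- A normal state: H and T are active with values -1 and ∞, only finitely
many addresses are active, other active addresses have values in ℕ, and
`Next` maps an active address (≠ T) to an active address of strictly larger
value. -/
def LSNormal (S : SState A H T) : Prop :=
  H ∈ S.Active ∧ T ∈ S.Active ∧ S.Active.Finite ∧
  S.Val H = ((-1 : ℤ) : WithTop ℤ) ∧ S.Val T = ⊤ ∧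
  (∀ a ∈ S.Active, a ≠ H → a ≠ T → ∃ n : ℕ, S.Val a = ((n : ℤ) : WithTop ℤ)) ∧
  (∀ a ∈ S.Active, a ≠ T → S.Next a ∈ S.Active ∧ S.Val a < S.Val (S.Next a))

/-- `l` is a path (a nonempty `Next`-chain of active addresses, not passing
through T except possibly at the end) from `a` to `b` in state `S`. -/
def LSIsPathFrom (S : SState A H T) (l : List A) (a b : A) : Prop :=
  l ≠ [] ∧ l.head? = some a ∧ l.getLast? = some b ∧
  (∀ x ∈ l, x ∈ S.Active) ∧
  l.Chain' (fun x y => x ≠ T ∧ S.Next x = y)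

/-- `b` is reachable from `a` (b is on the path from a towards Tail). -/
def LSReaches (S : SState A H T) (a b : A) : Prop :=
  ∃ l : List A, LSIsPathFrom S l a b

/-- `a` is on the main branch (the path from Head to Tail). -/
def LSOnMain (S : SState A H T) (a : A) : Prop :=
  LSReaches S H a

/-- A stuttering step: nothing observable changes (invocations, responses,
reads, failed operations, Add¹ and Rem⁰ actions). -/
def LSIsStutter (S1 S2 : SState A H T) : Prop :=
  S1.Active = S2.Active ∧ S1.Next = S2.Next ∧ S1.Val = S2.Val

/-- An Add⁰ step: a fresh address `a` of value `x` is activated and spliced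
into the main branch after `p`. -/
def LSIsAddStep (S1 S2 : SState A H T) : Prop :=
  ∃ (x : ℕ) (a p : A), a ∉ S1.Active ∧ p ∈ S1.Active ∧ p ≠ T ∧
    LSOnMain S1 p ∧
    S1.Val p < ((x : ℤ) : WithTop ℤ) ∧
    ((x : ℤ) : WithTop ℤ) < S1.Val (S1.Next p) ∧
    S2.Active = insert a S1.Active ∧
    (∀ y, y ≠ a → S2.Val y = S1.Val y) ∧ S2.Val a = ((x : ℤ) : WithTop ℤ) ∧
    (∀ y, y ≠ a → y ≠ p → S2.Next y = S1.Next y) ∧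
    S2.Next p = a ∧ S2.Next a = S1.Next p

/-- A Rem¹ step: the main-branch address `d` is physically removed by
redirecting the `Next` pointer of its main-branch predecessor `c`. -/
def LSIsRemStep (S1 S2 : SState A H T) : Prop :=
  ∃ c d : A, c ∈ S1.Active ∧ d ∈ S1.Active ∧ c ≠ T ∧ d ≠ T ∧ d ≠ H ∧
    S1.Next c = d ∧ LSOnMain S1 c ∧ LSOnMain S1 d ∧
    S2.Active = S1.Active ∧ S2.Val = S1.Val ∧
    (∀ y, y ≠ c → S2.Next y = S1.Next y) ∧ S2.Next c = S1.Next d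

/-- An execution triple of the Simpler Lazy Set algorithm. -/
def LSStep (S1 S2 : SState A H T) : Prop :=
  LSIsStutter S1 S2 ∨ LSIsAddStep S1 S2 ∨ LSIsRemStep S1 S2

lemma path_cases (S : SState A H T) {l : List A} {a : A}
    (h : LSIsPathFrom S l a T) :
    (a = T ∧ l = [T]) ∨
    (a ≠ T ∧ ∃ l', l = a :: S.Next a :: l' ∧
      LSIsPathFrom S (S.Next a :: l') (S.Next a) T) := by
  obtain ⟨hne, hhd, hlast, hmem, hch⟩ := h
  match l with
  | x :: l' =>
    simp only [List.head?_cons, Option.some.injEq] at hhd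
    subst hhd
    cases l' with
    | nil =>
      left
      simp only [List.getLast?_singleton, Option.some.injEq] at hlast
      subst hlast; exact ⟨rfl, rfl⟩
    | cons y l'' =>
      right
      unfold List.Chain' at hch; rw [List.isChain_cons_cons] at hch
      obtain ⟨⟨haT, hnx⟩, hch'⟩ := hch
      subst hnx
      refine ⟨haT, l'', rfl, List.cons_ne_nil _ _, rfl, ?_, ?_, hch'⟩
      · rw [List.getLast?_cons_cons] at hlast; exact hlast
      · intro x hx; exact hmem x (List.mem_cons_of_mem _ hx)

lemma path_lt {S : SState A H T} (hN : LSNormal S) :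
    ∀ (l : List A) (a : A), LSIsPathFrom S l a T →
      l.Chain' (fun x y => S.Val x < S.Val y) := by
  intro l
  induction l with
  | nil => intro a h; exact absurd rfl h.1
  | cons x l' IH =>
    intro a h
    rcases path_cases S h with ⟨hT, hl⟩ | ⟨haT, l'', heq, hpath⟩
    · obtain ⟨h1, h2⟩ := List.cons.injEq .. ▸ hl
      subst h2; exact List.isChain_singleton _
    · obtain ⟨h1, h2⟩ := List.cons.injEq .. ▸ heq
      subst h1; subst h2
      unfold List.Chain'; rw [List.isChain_cons_cons]
      have hxA : x ∈ S.Active := h.2.2.2.1 x List.mem_cons_self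
      exact ⟨(hN.2.2.2.2.2.2 x hxA haT).2, IH _ hpath⟩

lemma path_head_lt {S : SState A H T} (hN : LSNormal S) {l : List A} {a b : A}
    (h : LSIsPathFrom S (a :: l) a T) (hb : b ∈ l) : S.Val a < S.Val b := by
  have := path_lt hN (a :: l) a h
  have htrans : IsTrans A (fun x y => S.Val x < S.Val y) := ⟨fun _ _ _ => lt_trans⟩
  unfold List.Chain' at this; rw [List.isChain_iff_pairwise] at this
  exact (List.pairwise_cons.mp this).1 b hb

lemma path_head_ne {S : SState A H T} (hN : LSNormal S) {l : List A} {a b : A}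
    (h : LSIsPathFrom S (a :: l) a T) (hb : b ∈ l) : a ≠ b := by
  intro heq; exact absurd (heq ▸ path_head_lt hN h hb) (lt_irrefl _)

/-- Let (S1, e, S2) be a Rem step that physically removes
address `d` (Next in S2 agrees with S1 except at `c`, where `Next c` is
redirected from `d` to `Next d`). Let `a` be any active address, `Q` the path
from `a` to Tail in S1 and `R` the path from `a` to Tail in S2. Then either
R = Q (when c ∉ Q) or R = Q with d erased (when c ∈ Q, in which case d and
Next^{S1}(d) are also on Q). -/
theorem stmt13 [DecidableEq A] (S1 S2 : SState A H T)
    (hN1 : LSNormal S1) (hN2 : LSNormal S2)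
    (c d : A)
    (hc : c ∈ S1.Active) (hd : d ∈ S1.Active)
    (hcT : c ≠ T) (hdT : d ≠ T) (hdH : d ≠ H)
    (hcd : S1.Next c = d)
    (hcMain : LSOnMain S1 c) (hdMain : LSOnMain S1 d)
    (hAct : S2.Active = S1.Active) (hVal : S2.Val = S1.Val)
    (hNext : ∀ y, y ≠ c → S2.Next y = S1.Next y)
    (hNextc : S2.Next c = S1.Next d)
    (a : A) (ha : a ∈ S1.Active)
    (Q R : List A)
    (hQ : LSIsPathFrom S1 Q a T) (hR : LSIsPathFrom S2 R a T) :
    (c ∉ Q → R = Q) ∧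
    (c ∈ Q → d ∈ Q ∧ S1.Next d ∈ Q ∧ R = Q.erase d) := by
  have hcdne : c ≠ d := by
    intro h
    have := (hN1.2.2.2.2.2.2 c hc hcT).2
    rw [hcd, ← h] at this
    exact lt_irrefl _ this
  suffices Hmain : ∀ n (Q : List A) (a : A) (R : List A), Q.length ≤ n →
      a ∈ S1.Active → LSIsPathFrom S1 Q a T → LSIsPathFrom S2 R a T →
      (c ∉ Q → R = Q) ∧ (c ∈ Q → d ∈ Q ∧ S1.Next d ∈ Q ∧ R = Q.erase d) by
    exact Hmain Q.length Q a R le_rfl ha hQ hR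
  intro n
  induction n with
  | zero =>
    intro Q a R hlen _ hQ _
    rw [Nat.le_zero, List.length_eq_zero_iff] at hlen
    exact absurd hlen hQ.1
  | succ n IH =>
    intro Q a R hlen ha hQ hR
    rcases path_cases S1 hQ with ⟨haT, hQeq⟩ | ⟨haT, Q', hQeq, hQ'⟩
    · subst haT
      rcases path_cases S2 hR with ⟨_, hReq⟩ | ⟨hTT, _⟩
      · subst hQeq
        constructor
        · intro _; exact hReq
        · intro hcQ; simp only [List.mem_singleton] at hcQ; exact absurd hcQ hcT
      · exact absurd rfl hTT
    · rcases path_cases S2 hR with ⟨h, _⟩ | ⟨_, R', hReq, hR'⟩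
      · exact absurd h haT
      · subst hQeq; subst hReq
        by_cases hac : a = c
        · subst hac
          rw [hcd] at hQ hQ' ⊢
          rw [hNextc] at hR hR' ⊢
          rcases path_cases S1 hQ' with ⟨h, _⟩ | ⟨_, Q'', hQ'eq, hQ''⟩
          · exact absurd h hdT
          · obtain ⟨h1, h2⟩ := List.cons.injEq .. ▸ hQ'eq
            subst h2
            have hndA : S1.Next d ∈ S1.Active := (hN1.2.2.2.2.2.2 d hd hdT).1
            have hlen' : (S1.Next d :: Q'').length ≤ n := by
              simp only [List.length_cons] at hlen ⊢; omega
            have hIH := IH (S1.Next d :: Q'') (S1.Next d) (S1.Next d :: R')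
              hlen' hndA hQ'' hR'
            have hReq := hIH.1
              (fun hmem => path_head_ne hN1 hQ (List.mem_cons_of_mem _ hmem) rfl)
            obtain ⟨_, h2⟩ := List.cons.injEq .. ▸ hReq
            subst h2
            refine ⟨fun h => absurd List.mem_cons_self h, fun _ => ?_⟩
            refine ⟨List.mem_cons_of_mem _ List.mem_cons_self,
              List.mem_cons_of_mem _ (List.mem_cons_of_mem _ List.mem_cons_self), ?_⟩
            rw [List.erase_cons_tail (by simp [hcdne]), List.erase_cons_head]
        · have hnx : S2.Next a = S1.Next a := hNext a hac
          rw [hnx] at hR hR' ⊢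
          have hnaA : S1.Next a ∈ S1.Active := (hN1.2.2.2.2.2.2 a ha haT).1
          have hlen' : (S1.Next a :: Q').length ≤ n := by
            simp only [List.length_cons] at hlen ⊢; omega
          have hIH := IH (S1.Next a :: Q') (S1.Next a) (S1.Next a :: R')
            hlen' hnaA hQ' hR'
          constructor
          · intro hcQ
            have : c ∉ S1.Next a :: Q' := fun h => hcQ (List.mem_cons_of_mem _ h)
            rw [hIH.1 this]
          · intro hcQ
            have hcQ' : c ∈ S1.Next a :: Q' := by
              rcases List.mem_cons.mp hcQ with h | h
              · exact absurd h.symm hac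
              · exact h
            obtain ⟨hdQ, hndQ, hRt⟩ := hIH.2 hcQ'
            have had : a ≠ d := path_head_ne hN1 hQ hdQ
            refine ⟨List.mem_cons_of_mem _ hdQ, List.mem_cons_of_mem _ hndQ, ?_⟩
            rw [List.erase_cons_tail (by simp [had]), ← hRt]
end

section
/- In a history of the Simpler Lazy Set algorithm, once an address is physically removed it never returns to the main branch: for every execution triple (S,e,T), if address a is active in S but not on the main branch of S, then a is active in T but not on the main branch of T. -/
variable {A : Type} {H T : A}

section Aux

variable {A : Type} {H T : A}

/-- The step relation of a state. -/
def lsr (S : SState A H T) (x y : A) : Prop := x ≠ T ∧ S.Next x = y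

lemma chain_rtg {S : SState A H T} : ∀ (l : List A) (a b : A),
    l.head? = some a → l.getLast? = some b →
    l.Chain' (fun x y => x ≠ T ∧ S.Next x = y) →
    Relation.ReflTransGen (lsr S) a b
  | [], a, b, h, _, _ => by simp at h
  | [x], a, b, ha, hb, _ => by
      simp only [List.head?_cons, Option.some.injEq] at ha
      simp only [List.getLast?_singleton, Option.some.injEq] at hb
      subst ha; subst hb; exact .refl
  | x :: y :: l, a, b, ha, hb, hc => by
      simp only [List.head?_cons, Option.some.injEq] at ha
      subst ha
      rw [List.getLast?_cons_cons] at hb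
      rw [List.Chain', List.isChain_cons_cons] at hc
      exact .head hc.1 (chain_rtg (y :: l) y b rfl hb hc.2)

lemma reaches_iff_rtg {S : SState A H T} (hN : LSNormal S) {a b : A}
    (ha : a ∈ S.Active) :
    LSReaches S a b ↔ Relation.ReflTransGen (lsr S) a b := by
  constructor
  · rintro ⟨l, -, h1, h2, -, h4⟩
    exact chain_rtg l a b h1 h2 h4
  · intro h
    induction h with
    | refl =>
        exact ⟨[a], by simp [LSIsPathFrom, ha, List.Chain']⟩
    | @tail c b hac hcb ih =>
        obtain ⟨l, hne, hhd, hlast, hact, hch⟩ := ih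
        have hcmem : c ∈ l := List.mem_of_mem_getLast? (by rw [hlast]; rfl)
        have hcact : c ∈ S.Active := hact c hcmem
        have hbact : b ∈ S.Active := by
          have := (hN.2.2.2.2.2.2 c hcact hcb.1).1
          rwa [hcb.2] at this
        refine ⟨l ++ [b], by simp, ?_, ?_, ?_, ?_⟩
        · rw [List.head?_append_of_ne_nil _ hne]; exact hhd
        · simp [List.getLast?_concat]
        · intro x hx
          rcases List.mem_append.mp hx with h | h
          · exact hact x h
          · simp at h; subst h; exact hbact
        · rw [List.Chain', List.isChain_append]
          refine ⟨hch, by simp, ?_⟩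
          intro x hx y hy
          simp only [List.head?_cons, Option.mem_some_iff] at hy
          subst hy
          rw [hlast, Option.mem_some_iff] at hx
          subst hx
          exact hcb

end Aux

/-- Once an address is physically removed it never returns to
the main branch: for every execution triple (S1, e, S2), if address `a` is
active in S1 but not on the main branch of S1, then `a` is active in S2 but
not on the main branch of S2. -/
theorem stmt14 (S1 S2 : SState A H T)
    (hN1 : LSNormal S1) (hN2 : LSNormal S2)
    (hstep : LSStep S1 S2) :
    ∀ a : A, a ∈ S1.Active → ¬ LSOnMain S1 a →
      a ∈ S2.Active ∧ ¬ LSOnMain S2 a := by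
  intro a haA hnm
  have hH1 : H ∈ S1.Active := hN1.1
  have hH2 : H ∈ S2.Active := hN2.1
  rcases hstep with hst | hadd | hrem
  · -- stutter
    obtain ⟨h1, h2, h3⟩ := hst
    have hSeq : S1 = S2 := by cases S1; cases S2; simp_all
    subst hSeq
    exact ⟨haA, hnm⟩
  · -- Add step
    obtain ⟨x, n, p, hnA, hpA, hpT, hpM, hv1, hv2, hAct, hV, hVn, hNx, hNp, hNn⟩ := hadd
    have haA2 : a ∈ S2.Active := by rw [hAct]; exact Set.mem_insert_of_mem _ haA
    refine ⟨haA2, ?_⟩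
    intro hm
    apply hnm
    rw [LSOnMain, reaches_iff_rtg hN2 hH2] at hm
    rw [LSOnMain, reaches_iff_rtg hN1 hH1]
    classical
    have hanen : a ≠ n := fun h => hnA (h ▸ haA)
    have hnpA : S1.Next p ∈ S1.Active := (hN1.2.2.2.2.2.2 p hpA hpT).1
    have hnpn : S1.Next p ≠ n := fun h => hnA (h ▸ hnpA)
    -- f maps n to S1.Next p, else identity
    set f : A → A := fun z => if z = n then S1.Next p else z with hf
    have key : ∀ z, Relation.ReflTransGen (lsr S2) z a → z ∈ S2.Active →
        Relation.ReflTransGen (lsr S1) (f z) a := by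
      intro z hz
      induction hz using Relation.ReflTransGen.head_induction_on with
      | refl =>
          intro _
          simp only [hf, if_neg hanen]
          exact .refl
      | @head u v huv hva ih =>
          intro huA
          have hvA2 : v ∈ S2.Active := by
            have := (hN2.2.2.2.2.2.2 u huA huv.1).1
            rwa [huv.2] at this
          have ihv := ih hvA2
          by_cases hun : u = n
          · subst hun
            have hv : v = S1.Next p := by rw [← huv.2, hNn]
            subst hv
            simpa only [hf, if_pos rfl, if_neg hnpn] using ihv
          · have huA1 : u ∈ S1.Active := by
              rw [hAct] at huA
              rcases huA with h | h
              · exact absurd h hun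
              · exact h
            by_cases hup : u = p
            · subst hup
              have hv : v = n := by rw [← huv.2, hNp]
              subst hv
              simp only [hf, if_pos rfl] at ihv
              simp only [hf, if_neg hun]
              exact Relation.ReflTransGen.head ⟨hpT, rfl⟩ ihv
            · have hnx : S1.Next u = v := by rw [← hNx u hun hup, huv.2]
              have hvn : v ≠ n := by
                intro h; subst h
                apply hnA
                rw [← hnx]
                exact (hN1.2.2.2.2.2.2 u huA1 huv.1).1
              simp only [hf, if_neg hvn] at ihv
              simp only [hf, if_neg hun]
              exact Relation.ReflTransGen.head ⟨huv.1, hnx⟩ ihv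
    have hHn : H ≠ n := fun h => hnA (h ▸ hH1)
    have := key H hm hH2
    simpa only [hf, if_neg hHn] using this
  · -- Rem step
    obtain ⟨c, d, hcA, hdA, hcT, hdT, hdH, hcd, hcM, hdM, hAct, hV, hNx, hNc⟩ := hrem
    have haA2 : a ∈ S2.Active := by rw [hAct]; exact haA
    refine ⟨haA2, ?_⟩
    intro hm
    apply hnm
    rw [LSOnMain, reaches_iff_rtg hN2 hH2] at hm
    rw [LSOnMain, reaches_iff_rtg hN1 hH1]
    have key : ∀ z, Relation.ReflTransGen (lsr S2) z a → z ∈ S1.Active →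
        Relation.ReflTransGen (lsr S1) z a := by
      intro z hz
      induction hz using Relation.ReflTransGen.head_induction_on with
      | refl => intro _; exact .refl
      | @head u v huv hva ih =>
          intro huA
          have hvA1 : v ∈ S1.Active := by
            have := (hN2.2.2.2.2.2.2 u (hAct ▸ huA) huv.1).1
            rw [huv.2, hAct] at this
            exact this
          have ihv := ih hvA1
          by_cases huc : u = c
          · subst huc
            have hv : v = S1.Next d := by rw [← huv.2, hNc]
            refine Relation.ReflTransGen.head ⟨hcT, hcd⟩ ?_
            exact Relation.ReflTransGen.head ⟨hdT, hv.symm⟩ ihv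
          · have hnx : S1.Next u = v := by rw [← hNx u huc, huv.2]
            exact Relation.ReflTransGen.head ⟨huv.1, hnx⟩ ihv
    exact key H hm hH1
end

section
/- In a history of the Simpler Lazy Set algorithm, if in state S_i active address b is not on the path from active address a (a ≠ Tail) to Tail, then in every later state S_j (j > i), b is not on the path from a to Tail. -/
variable {A : Type} {H T : A}

/-- Auxiliary edge relation. -/
def LSRel (S : SState A H T) (x y : A) : Prop :=
  x ∈ S.Active ∧ x ≠ T ∧ S.Next x = y ∧ y ∈ S.Active

lemma path_rtg (S : SState A H T) :
    ∀ (l : List A) (a b : A), l.head? = some a → l.getLast? = some b →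
    (∀ x ∈ l, x ∈ S.Active) → l.Chain' (fun x y => x ≠ T ∧ S.Next x = y) →
    Relation.ReflTransGen (LSRel S) a b := by
  intro l
  induction l with
  | nil => intro a b h; simp at h
  | cons x t ih =>
    intro a b hhd hlast hact hch
    cases t with
    | nil =>
      simp only [List.head?_cons, Option.some.injEq] at hhd
      simp only [List.getLast?_singleton, Option.some.injEq] at hlast
      subst hhd; subst hlast; exact Relation.ReflTransGen.refl
    | cons y t' =>
      simp only [List.head?_cons, Option.some.injEq] at hhd
      subst hhd
      rw [List.Chain', List.isChain_cons_cons] at hch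
      have hlast' : (y :: t').getLast? = some b := by
        rw [List.getLast?_cons_cons] at hlast; exact hlast
      have hedge : LSRel S x y :=
        ⟨hact x (by simp), hch.1.1, hch.1.2, hact y (by simp)⟩
      exact Relation.ReflTransGen.head hedge
        (ih y b rfl hlast' (fun z hz => hact z (List.mem_cons_of_mem _ hz)) hch.2)

lemma rtg_path (S : SState A H T) {a b : A} (ha : a ∈ S.Active)
    (h : Relation.ReflTransGen (LSRel S) a b) : LSReaches S a b := by
  induction h with
  | refl => exact ⟨[a], by simp, by simp, by simp, by simpa using ha, List.isChain_singleton _⟩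
  | tail _ e ihh =>
    rename_i c d hcd
    obtain ⟨l, hne, hhd, hlast, hact, hch⟩ := ihh
    refine ⟨l ++ [d], by simp, ?_, by simp, ?_, ?_⟩
    · rw [List.head?_append_of_ne_nil l hne]; exact hhd
    · intro x hx
      rcases List.mem_append.1 hx with hx | hx
      · exact hact x hx
      · simp at hx; subst hx; exact e.2.2.2
    · rw [List.Chain', List.isChain_append]
      refine ⟨hch, by simp, ?_⟩
      intro x hx y hy
      rw [hlast] at hx
      simp only [List.head?_cons, Option.mem_def, Option.some.injEq] at hx hy
      subst hx; subst hy
      exact ⟨e.2.1, e.2.2.1⟩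

lemma reaches_iff (S : SState A H T) (a b : A) :
    LSReaches S a b ↔ a ∈ S.Active ∧ Relation.ReflTransGen (LSRel S) a b := by
  constructor
  · rintro ⟨l, hne, hhd, hlast, hact, hch⟩
    exact ⟨hact a (by cases l with
      | nil => exact absurd rfl hne
      | cons x t => simp at hhd; subst hhd; simp),
      path_rtg S l a b hhd hlast hact hch⟩
  · rintro ⟨ha, h⟩
    exact rtg_path S ha h

lemma active_mono {S1 S2 : SState A H T} (hs : LSStep S1 S2) :
    S1.Active ⊆ S2.Active := by
  rcases hs with h | h | h
  · rw [h.1]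
  · obtain ⟨x, a, p, _, _, _, _, _, _, hAct, _⟩ := h
    rw [hAct]; exact Set.subset_insert _ _
  · obtain ⟨c, d, _, _, _, _, _, _, _, _, hAct, _⟩ := h
    rw [hAct]

lemma step_back {S1 S2 : SState A H T} (hn : LSNormal S1) (hs : LSStep S1 S2)
    {a b : A} (ha : a ∈ S1.Active) (hb : b ∈ S1.Active)
    (h : Relation.ReflTransGen (LSRel S2) a b) :
    Relation.ReflTransGen (LSRel S1) a b := by
  have nextActive : ∀ y ∈ S1.Active, y ≠ T → S1.Next y ∈ S1.Active :=
    fun y hy hyT => (hn.2.2.2.2.2.2 y hy hyT).1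
  rcases hs with hst | hadd | hrem
  · obtain ⟨hA, hN, _⟩ := hst
    refine Relation.ReflTransGen.mono ?_ _ _ h
    intro x y hxy
    exact ⟨hA ▸ hxy.1, hxy.2.1, hN ▸ hxy.2.2.1, hA ▸ hxy.2.2.2⟩
  · obtain ⟨x0, a', p, ha', hp, hpT, _, _, _, hAct, _, _, hNy, hNp, hNa⟩ := hadd
    have hS2act : ∀ y, y ∈ S2.Active → y ≠ a' → y ∈ S1.Active := by
      intro y hy hya
      rw [hAct] at hy
      rcases hy with hy | hy
      · exact absurd hy hya
      · exact hy
    have key : ∀ y, Relation.ReflTransGen (LSRel S2) y b →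
        ((y = a' → Relation.ReflTransGen (LSRel S1) (S1.Next p) b) ∧
         (y ∈ S1.Active → Relation.ReflTransGen (LSRel S1) y b)) := by
      intro y hy
      induction hy using Relation.ReflTransGen.head_induction_on with
      | refl =>
        exact ⟨fun hh => absurd (hh ▸ hb) ha', fun _ => Relation.ReflTransGen.refl⟩
      | head e _ ih =>
        rename_i y z _
        obtain ⟨hyA2, hyT, hyN, hzA2⟩ := e
        by_cases hya : y = a'
        · subst hya
          have hz : z = S1.Next p := by rw [← hyN, hNa]
          have hzS1 : S1.Next p ∈ S1.Active := nextActive p hp hpT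
          refine ⟨fun _ => ?_, fun hc => absurd hc ha'⟩
          exact hz ▸ (ih.2 (hz ▸ hzS1))
        · refine ⟨fun hh => absurd hh hya, fun hyA1 => ?_⟩
          by_cases hyp : y = p
          · subst hyp
            have hz : z = a' := by rw [← hyN, hNp]
            have hedge : LSRel S1 y (S1.Next y) :=
              ⟨hyA1, hyT, rfl, nextActive y hyA1 hyT⟩
            exact Relation.ReflTransGen.head hedge (ih.1 hz)
          · have hz : z = S1.Next y := by rw [← hyN, hNy y hya hyp]
            have hzS1 : z ∈ S1.Active := hz ▸ nextActive y hyA1 hyT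
            exact Relation.ReflTransGen.head ⟨hyA1, hyT, hz.symm, hzS1⟩ (ih.2 hzS1)
    exact (key a h).2 ha
  · obtain ⟨c, d, hc, hd, hcT, hdT, _, hncd, _, _, hAct, _, hNy, hNc⟩ := hrem
    clear hb
    induction h with
    | refl => exact Relation.ReflTransGen.refl
    | tail _ e ihh =>
      rename_i u v huv
      refine Relation.ReflTransGen.trans ihh ?_
      obtain ⟨huA2, huT, huN, hvA2⟩ := e
      have huA1 : u ∈ S1.Active := hAct ▸ huA2
      have hvA1 : v ∈ S1.Active := hAct ▸ hvA2
      by_cases huc : u = c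
      · subst huc
        have hv : v = S1.Next d := by rw [← huN, hNc]
        exact Relation.ReflTransGen.head ⟨hc, hcT, hncd, hd⟩
          (Relation.ReflTransGen.single ⟨hd, hdT, hv.symm, hvA1⟩)
      · have hv : v = S1.Next u := by rw [← huN, hNy u huc]
        exact Relation.ReflTransGen.single ⟨huA1, huT, hv.symm, hvA1⟩

/-- In a history of the Simpler Lazy Set algorithm, if in state
S_i active address `b` is not on the path from active address `a` (a ≠ Tail)
to Tail, then in every later state S_j (j > i), `b` is not on the path from
`a` to Tail. -/
theorem stmt15 (Ss : ℕ → SState A H T)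
    (hnorm : ∀ i, LSNormal (Ss i))
    (hstep : ∀ i, LSStep (Ss i) (Ss (i + 1))) :
    ∀ i (a b : A), a ∈ (Ss i).Active → a ≠ T → b ∈ (Ss i).Active →
      ¬ LSReaches (Ss i) a b →
      ∀ j, i < j → ¬ LSReaches (Ss j) a b := by
  intro i a b ha _haT hb hnr j hij
  have main : ∀ j, i ≤ j →
      a ∈ (Ss j).Active ∧ b ∈ (Ss j).Active ∧ ¬ LSReaches (Ss j) a b := by
    intro j hj
    induction j, hj using Nat.le_induction with
    | base => exact ⟨ha, hb, hnr⟩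
    | succ n hn ih =>
      obtain ⟨ha', hb', hnr'⟩ := ih
      refine ⟨active_mono (hstep n) ha', active_mono (hstep n) hb', ?_⟩
      intro hr
      rw [reaches_iff] at hr
      exact hnr' ((reaches_iff _ _ _).2
        ⟨ha', step_back (hnorm n) (hstep n) ha' hb' hr.2⟩)
  exact (main j (le_of_lt hij)).2.2
end

section
/- In a history of the Simpler Lazy Set algorithm, if active addresses a ≠ b have a path from a to b in state S_i but no path from a to b in state S_{i+1}, then letting b⁻ be the address on the path with Next(b⁻)=b in S_i: both b⁻ and b are on the main branch of S_i, and (S_i, e_i, S_{i+1}) is a Rem triple that removes b by setting Next(b⁻) in S_{i+1} to Nextˢⁱ(b). -/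
variable {A : Type} {H T : A}

def LSE (S : SState A H T) (x y : A) : Prop :=
  x ∈ S.Active ∧ x ≠ T ∧ S.Next x = y

lemma lse_val_lt {S : SState A H T} (hn : LSNormal S) {x y : A}
    (h : LSE S x y) : S.Val x < S.Val y := by
  have := hn.2.2.2.2.2.2 x h.1 h.2.1
  rw [h.2.2] at this; exact this.2

lemma rtg_val_le {S : SState A H T} (hn : LSNormal S) {x y : A}
    (h : Relation.ReflTransGen (LSE S) x y) : S.Val x ≤ S.Val y := by
  induction h with
  | refl => exact le_refl _
  | tail _ h2 ih => exact le_trans ih (le_of_lt (lse_val_lt hn h2))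

lemma pathFrom_rtg {S : SState A H T} {l : List A} {a b : A}
    (h : LSIsPathFrom S l a b) : a ∈ S.Active ∧ Relation.ReflTransGen (LSE S) a b := by
  induction l generalizing a with
  | nil => exact absurd rfl h.1
  | cons x l ih =>
    have hxa : x = a := by simpa using h.2.1
    subst hxa
    cases l with
    | nil =>
      have hxb : x = b := by simpa using h.2.2.1
      subst hxb
      exact ⟨h.2.2.2.1 x (by simp), Relation.ReflTransGen.refl⟩
    | cons y l' =>
      have hch := h.2.2.2.2
      rw [List.Chain', List.isChain_cons_cons] at hch
      have hpath : LSIsPathFrom S (y :: l') y b := by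
        refine ⟨by simp, by simp, ?_, ?_, hch.2⟩
        · simpa [List.getLast?_cons_cons] using h.2.2.1
        · intro z hz; exact h.2.2.2.1 z (by simp [hz])
      obtain ⟨hyA, hrtg⟩ := ih hpath
      have hxA : x ∈ S.Active := h.2.2.2.1 x (by simp)
      exact ⟨hxA, hrtg.head ⟨hxA, hch.1.1, hch.1.2⟩⟩

lemma rtg_reaches {S : SState A H T} (hn : LSNormal S) {a b : A}
    (ha : a ∈ S.Active) (h : Relation.ReflTransGen (LSE S) a b) : LSReaches S a b := by
  have main : ∀ x, Relation.ReflTransGen (LSE S) x b → x ∈ S.Active → LSReaches S x b := by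
    intro x hx
    induction hx using Relation.ReflTransGen.head_induction_on with
    | refl =>
      intro hbA
      exact ⟨[b], by simp, by simp, by simp, by simpa using hbA, List.isChain_singleton _⟩
    | head h' h'' ih =>
      intro hxA
      rename_i x' c
      have hcA : c ∈ S.Active := by
        have := hn.2.2.2.2.2.2 x' h'.1 h'.2.1
        rw [h'.2.2] at this; exact this.1
      obtain ⟨l, hl⟩ := ih hcA
      refine ⟨x' :: l, by simp, by simp, ?_, ?_, ?_⟩
      · cases l with
        | nil => exact absurd rfl hl.1
        | cons z l' => simpa [List.getLast?_cons_cons] using hl.2.2.1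
      · intro z hz
        rcases List.mem_cons.1 hz with h1 | h1
        · exact h1 ▸ hxA
        · exact hl.2.2.2.1 z h1
      · rw [List.Chain', List.isChain_cons]
        refine ⟨?_, hl.2.2.2.2⟩
        intro y hy
        rw [hl.2.1] at hy
        cases hy
        exact ⟨h'.2.1, h'.2.2⟩
  exact main a h ha

lemma reaches_rtg_mono {S1 S2 : SState A H T} {a b : A}
    (h : ∀ x y, LSE S1 x y → Relation.ReflTransGen (LSE S2) x y)
    (hr : Relation.ReflTransGen (LSE S1) a b) : Relation.ReflTransGen (LSE S2) a b := by
  induction hr with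
  | refl => exact Relation.ReflTransGen.refl
  | tail _ h2 ih => exact ih.trans (h _ _ h2)

/-- In a history of the Simpler Lazy Set algorithm, if active
addresses a ≠ b have a path from a to b in state S_i but no path from a to b
in S_{i+1}, then, letting b⁻ be the address on that path with Next(b⁻) = b:
both b⁻ and b are on the main branch of S_i, and the step from S_i to
S_{i+1} is a Rem triple removing b by setting Next(b⁻) to Next^{S_i}(b). -/
theorem stmt16 (Ss : ℕ → SState A H T)
    (hnorm : ∀ i, LSNormal (Ss i))
    (hstep : ∀ i, LSStep (Ss i) (Ss (i + 1))) :
    ∀ i (a b : A), a ≠ b → a ∈ (Ss i).Active → b ∈ (Ss i).Active →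
      LSReaches (Ss i) a b → ¬ LSReaches (Ss (i + 1)) a b →
      ∃ bm : A, (Ss i).Next bm = b ∧ LSReaches (Ss i) a bm ∧
        LSOnMain (Ss i) bm ∧ LSOnMain (Ss i) b ∧
        (Ss (i + 1)).Active = (Ss i).Active ∧
        (Ss (i + 1)).Next bm = (Ss i).Next b ∧
        (∀ y, y ≠ bm → (Ss (i + 1)).Next y = (Ss i).Next y) := by
  intro i a b hab ha hb hreach hnot
  obtain ⟨l, hl⟩ := hreach
  obtain ⟨haA, hr1⟩ := pathFrom_rtg hl
  have hn1 := hnorm i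
  have hn2 := hnorm (i + 1)
  rcases hstep i with hstut | hadd | hrem
  · -- stutter: contradiction
    exact absurd (rtg_reaches hn2 (hstut.1 ▸ haA)
      (reaches_rtg_mono (fun x y hxy => Relation.ReflTransGen.single
        ⟨hstut.1 ▸ hxy.1, hxy.2.1, hstut.2.1 ▸ hxy.2.2⟩) hr1)) hnot
  · -- add step: contradiction
    obtain ⟨x, an, p, hanA, hpA, hpT, _, _, _, hA2, _, _, hNy, hNp, hNan⟩ := hadd
    have hanT : an ≠ T := fun h => hanA (h ▸ hn1.2.1)
    have key : ∀ u v, LSE (Ss i) u v → Relation.ReflTransGen (LSE (Ss (i+1))) u v := by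
      intro u v huv
      have huan : u ≠ an := fun h => hanA (h ▸ huv.1)
      have huA2 : u ∈ (Ss (i+1)).Active := by rw [hA2]; exact Set.mem_insert_of_mem _ huv.1
      by_cases hup : u = p
      · subst hup
        refine Relation.ReflTransGen.head ⟨huA2, huv.2.1, hNp⟩
          (Relation.ReflTransGen.single ⟨?_, hanT, ?_⟩)
        · rw [hA2]; exact Set.mem_insert _ _
        · rw [hNan, huv.2.2]
      · exact Relation.ReflTransGen.single ⟨huA2, huv.2.1, (hNy u huan hup).trans huv.2.2⟩
    have haA2 : a ∈ (Ss (i+1)).Active := by rw [hA2]; exact Set.mem_insert_of_mem _ haA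
    exact absurd (rtg_reaches hn2 haA2 (reaches_rtg_mono key hr1)) hnot
  · -- rem step
    obtain ⟨c, d, hcA, hdA, hcT, hdT, _, hNcd, hMc, hMd, hA2, _, hNy, hNc⟩ := hrem
    have hcd : c ≠ d := by
      intro h
      exact absurd (lse_val_lt hn1 ⟨hcA, hcT, hNcd⟩) (h ▸ lt_irrefl _)
    by_cases hbd : b = d
    · subst hbd
      rcases hr1.cases_tail with h | ⟨bm, hrabm, hE⟩
      · exact absurd h.symm hab
      by_cases hbmc : bm = c
      · subst hbmc
        exact ⟨bm, hNcd, rtg_reaches hn1 haA hrabm, hMc, hMd, hA2, hNc, hNy⟩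
      · exfalso
        have key : ∀ u, Relation.ReflTransGen (LSE (Ss i)) u bm →
            Relation.ReflTransGen (LSE (Ss (i+1))) u bm := by
          intro u hu
          induction hu using Relation.ReflTransGen.head_induction_on with
          | refl => exact Relation.ReflTransGen.refl
          | head h' h'' ih =>
            rename_i u' v'
            by_cases huc : u' = c
            · subst huc
              have hvb : v' = b := by rw [← h'.2.2, hNcd]
              have h1 := rtg_val_le hn1 h''
              rw [hvb] at h1
              exact absurd h1 (not_le.2 (lse_val_lt hn1 hE))
            · exact ih.head ⟨hA2 ▸ h'.1, h'.2.1, (hNy u' huc).trans h'.2.2⟩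
        have hstep2 : LSE (Ss (i+1)) bm b :=
          ⟨hA2 ▸ hE.1, hE.2.1, (hNy bm hbmc).trans hE.2.2⟩
        exact hnot (rtg_reaches hn2 (hA2 ▸ haA) ((key a hrabm).tail hstep2))
    · exfalso
      have key : ∀ u, Relation.ReflTransGen (LSE (Ss i)) u b →
          Relation.ReflTransGen (LSE (Ss (i+1))) u b := by
        intro u hu
        induction hu using Relation.ReflTransGen.head_induction_on with
        | refl => exact Relation.ReflTransGen.refl
        | head h' h'' ih =>
          rename_i u' v'
          by_cases huc : u' = c
          · rw [huc]
            have hvd : v' = d := by rw [← h'.2.2, huc, hNcd]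
            have hvc : v' ≠ c := fun hh => hcd ((hh ▸ hvd : c = d)).symm.symm
            rcases ih.cases_head with h | ⟨w, hdw, hwb⟩
            · exact absurd (h ▸ hvd : b = d) hbd
            · have h2 := hdw.2.2
              rw [hNy v' hvc] at h2
              refine hwb.head ⟨hA2 ▸ hcA, hcT, ?_⟩
              rw [hNc, ← hvd, h2]
          · exact ih.head ⟨hA2 ▸ h'.1, h'.2.1, (hNy u' huc).trans h'.2.2⟩
      exact hnot (rtg_reaches hn2 (hA2 ▸ haA) (key a hr1))
end

section
/- In a Contains(x) execution of the Simpler Lazy Set algorithm with pseudo-path a₀,…,aₘ, the values satisfy Val(a₀) < Val(a₁) < ⋯ < Val(a_{m-1}) < x ≤ Val(aₘ); in particular every Contains execution traverses only finitely many addresses and terminates. -/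
variable {A : Type} {H T : A}

/-! Addresses never leave the active set and active addresses never change value, so every value
along the pseudo-path may be read in the final state `S_{j_m}`. There the step `a_k → a_{k+1}`
increases the value, because in `S_{j_{k+1}}` the address `a_k` is still active, is not Tail
(its value is below `x < ∞`), and `Next` increases values in a normal state. -/

theorem LSStep.active_subset {S1 S2 : SState A H T} (h : LSStep S1 S2) :
    S1.Active ⊆ S2.Active := by
  rcases h with ⟨hA, -, -⟩ | ⟨-, a, -, -, -, -, -, -, -, hA, -⟩ |
    ⟨-, -, -, -, -, -, -, -, -, -, hA, -⟩
  · exact hA.le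
  · exact hA ▸ Set.subset_insert a S1.Active
  · exact hA.ge

theorem LSStep.val_eq_of_mem {S1 S2 : SState A H T} (h : LSStep S1 S2) {b : A}
    (hb : b ∈ S1.Active) : S2.Val b = S1.Val b := by
  rcases h with ⟨-, -, hV⟩ | ⟨-, a, -, ha, -, -, -, -, -, -, hV, -⟩ |
    ⟨-, -, -, -, -, -, -, -, -, -, -, hV, -⟩
  · rw [hV]
  · exact hV b (ne_of_mem_of_not_mem hb ha)
  · rw [hV]

theorem active_mono_of_forall_LSStep {Ss : ℕ → SState A H T}
    (hstep : ∀ i, LSStep (Ss i) (Ss (i + 1))) : Monotone fun i => (Ss i).Active :=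
  monotone_nat_of_le_succ fun i => (hstep i).active_subset

theorem val_eq_of_forall_LSStep {Ss : ℕ → SState A H T}
    (hstep : ∀ i, LSStep (Ss i) (Ss (i + 1))) {i i' : ℕ} (hii' : i ≤ i') {b : A}
    (hb : b ∈ (Ss i).Active) : (Ss i').Val b = (Ss i).Val b := by
  induction i', hii' using Nat.le_induction with
  | base => rfl
  | succ n hin ih =>
    rw [(hstep n).val_eq_of_mem (active_mono_of_forall_LSStep hstep hin hb), ih]

theorem LSNormal.val_lt_val_next {S : SState A H T} (hS : LSNormal S) {b : A}
    (hb : b ∈ S.Active) (hval : S.Val b ≠ ⊤) : S.Val b < S.Val (S.Next b) :=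
  (hS.2.2.2.2.2.2 b hb fun hbT => hval (hbT ▸ hS.2.2.2.2.1)).2

theorem stmt18_general (Ss : ℕ → SState A H T)
    (hnorm : ∀ i, LSNormal (Ss i))
    (hstep : ∀ i, LSStep (Ss i) (Ss (i + 1)))
    (x m : ℕ) (a : ℕ → A) (j : ℕ → ℕ)
    (hj : ∀ k l, k < l → l ≤ m → j k < j l)
    (hact : ∀ k ≤ m, a k ∈ (Ss (j k)).Active)
    (hsucc : ∀ k < m, a (k + 1) = (Ss (j (k + 1))).Next (a k))
    (hloop : ∀ k < m, (Ss (j k)).Val (a k) < ((x : ℤ) : WithTop ℤ))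
    (hstop : ((x : ℤ) : WithTop ℤ) ≤ (Ss (j m)).Val (a m)) :
    (∀ k l, k < l → l ≤ m → (Ss (j m)).Val (a k) < (Ss (j m)).Val (a l)) ∧
    (∀ k < m, (Ss (j m)).Val (a k) < ((x : ℤ) : WithTop ℤ)) ∧
    ((x : ℤ) : WithTop ℤ) ≤ (Ss (j m)).Val (a m) ∧
    (∀ k l, k ≤ m → l ≤ m → a k = a l → k = l) := by
  have hval : ∀ k ≤ m, (Ss (j m)).Val (a k) = (Ss (j k)).Val (a k) := fun k hk =>
    val_eq_of_forall_LSStep hstep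
      (hk.eq_or_lt.elim (fun hkm => hkm ▸ le_rfl) fun hkm => (hj k m hkm le_rfl).le) (hact k hk)
  have hmono : StrictMonoOn (fun k => (Ss (j m)).Val (a k)) (Set.Iic m) := by
    refine strictMonoOn_Iic_of_lt_succ fun k hk => ?_
    have hjk : j k ≤ j (k + 1) := (hj k (k + 1) k.lt_succ_self hk).le
    have hvk := val_eq_of_forall_LSStep hstep hjk (hact k hk.le)
    calc (Ss (j m)).Val (a k) = (Ss (j (k + 1))).Val (a k) := by rw [hval k hk.le, hvk]
      _ < (Ss (j (k + 1))).Val (a (k + 1)) := by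
        rw [hsucc k hk]
        exact (hnorm _).val_lt_val_next (active_mono_of_forall_LSStep hstep hjk (hact k hk.le))
          (hvk ▸ (hloop k hk).ne_top)
      _ = (Ss (j m)).Val (a (Order.succ k)) := (hval (k + 1) hk).symm
  exact ⟨fun k l hkl hlm => hmono (hkl.le.trans hlm) hlm hkl,
    fun k hk => hval k hk.le ▸ hloop k hk, hstop,
    fun k l hk hl => hmono.injOn hk hl ∘ congrArg _⟩

/-- In a Contains(x) execution of the Simpler Lazy Set
algorithm with pseudo-path a₀, …, aₘ (recorded in the states S_{j₀}, …,
S_{jₘ} where the successive assignments to curr happen), the values satisfy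
Val(a₀) < Val(a₁) < ⋯ < Val(a_{m-1}) < x ≤ Val(aₘ); in particular the
traversal visits pairwise distinct addresses, i.e. only finitely many. -/
theorem stmt18 (Ss : ℕ → SState A H T)
    (hnorm : ∀ i, LSNormal (Ss i))
    (hstep : ∀ i, LSStep (Ss i) (Ss (i + 1)))
    (x m : ℕ) (a : ℕ → A) (j : ℕ → ℕ)
    (hj : ∀ k l, k < l → l ≤ m → j k < j l)
    (ha0 : a 0 = H)
    (hact : ∀ k ≤ m, a k ∈ (Ss (j k)).Active)
    (hsucc : ∀ k < m, a (k + 1) = (Ss (j (k + 1))).Next (a k))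
    (hloop : ∀ k < m, (Ss (j k)).Val (a k) < ((x : ℤ) : WithTop ℤ))
    (hstop : ((x : ℤ) : WithTop ℤ) ≤ (Ss (j m)).Val (a m)) :
    (∀ k l, k < l → l ≤ m → (Ss (j m)).Val (a k) < (Ss (j m)).Val (a l)) ∧
    (∀ k < m, (Ss (j m)).Val (a k) < ((x : ℤ) : WithTop ℤ)) ∧
    ((x : ℤ) : WithTop ℤ) ≤ (Ss (j m)).Val (a m) ∧
    (∀ k l, k ≤ m → l ≤ m → a k = a l → k = l) :=
  stmt18_general Ss hnorm hstep x m a j hj hact hsucc hloop hstop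
end
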